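/- Let Q be the Minkowski quadratic form on ℝ⁴ = (Fin 4 → ℝ), Q(x) = x₀² − x₁² − x₂² − x₃², with signature function η : Fin 4 → ℝ, η(0) = 1 and η(i) = −1 for i ≠ 0, and let γ i = ι(e_i) in the Clifford algebra Cl(Q). Let F : Fin 4 → Fin 4 → ℝ be antisymmetric, F i j = −F j i, and set 𝐅 = Σ_{i,j} F i j • (γ i * γ j). Then for every index a, (1/4) • (𝐅 * γ a − γ a * 𝐅) = η(a) • Σ_i F i a • γ i. (This is the algebraic content of the paper's identity (1/4)[dξ, γ^α] = (D_ι ξ^α) γ^ι valid when the coefficient matrix D_ι ξ_κ is antisymmetric, i.e. when ξ is a Killing vector field.) -/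
import Mathlib


/-- For an antisymmetric coefficient matrix `F`, the bivector
`𝐅 = Σ F i j • γ i * γ j` in the Clifford algebra of the Minkowski form on `ℝ⁴`
satisfies `(1/4)[𝐅, γ a] = η a • Σ_i F i a • γ i`. -/
theorem minkowski_clifford_quarter_comm_antisymm
    (η : Fin 4 → ℝ) (hη0 : η 0 = 1) (hη : ∀ i : Fin 4, i ≠ 0 → η i = -1)
    (Q : QuadraticForm ℝ (Fin 4 → ℝ))
    (hQ : ∀ x : Fin 4 → ℝ, Q x = x 0 ^ 2 - x 1 ^ 2 - x 2 ^ 2 - x 3 ^ 2)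
    (γ : Fin 4 → CliffordAlgebra Q)
    (hγ : ∀ i : Fin 4, γ i = CliffordAlgebra.ι Q (Pi.single i 1))
    (F : Fin 4 → Fin 4 → ℝ) (hF : ∀ i j : Fin 4, F i j = -F j i) (a : Fin 4) :
    (1 / 4 : ℝ) • ((∑ i : Fin 4, ∑ j : Fin 4, F i j • (γ i * γ j)) * γ a -
        γ a * (∑ i : Fin 4, ∑ j : Fin 4, F i j • (γ i * γ j))) =
      η a • ∑ i : Fin 4, F i a • γ i := by
  -- the anticommutation relations `γ i γ j + γ j γ i = 2 η j δ_{ij}`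
  have key : ∀ i j : Fin 4, γ i * γ j + γ j * γ i
      = algebraMap ℝ (CliffordAlgebra Q) (if i = j then 2 * η j else 0) := by
    intro i j
    have h1 : η 1 = -1 := hη 1 (by decide)
    have h2 : η 2 = -1 := hη 2 (by decide)
    have h3 : η 3 = -1 := hη 3 (by decide)
    rw [hγ, hγ, CliffordAlgebra.ι_mul_ι_add_swap]
    congr 1
    rw [QuadraticMap.polar]
    fin_cases i <;> fin_cases j <;>
      simp [hQ, Pi.single_apply, hη0, h1, h2, h3] <;> norm_num
  -- the commutator of a bivector with a generator
  have hcomm : ∀ i j b : Fin 4, γ i * γ j * γ b - γ b * (γ i * γ j)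
      = (if j = b then 2 * η b else 0) • γ i - (if i = b then 2 * η b else 0) • γ j := by
    intro i j b
    have h1 : γ j * γ b
        = algebraMap ℝ (CliffordAlgebra Q) (if j = b then 2 * η b else 0) - γ b * γ j :=
      eq_sub_of_add_eq (key j b)
    have h2 : γ i * γ b
        = algebraMap ℝ (CliffordAlgebra Q) (if i = b then 2 * η b else 0) - γ b * γ i :=
      eq_sub_of_add_eq (key i b)
    rw [mul_assoc, h1, mul_sub, ← mul_assoc, h2, sub_mul]
    simp only [Algebra.smul_def, ← Algebra.commutes]
    noncomm_ring
  -- sum up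
  rw [Finset.sum_mul, Finset.mul_sum, ← Finset.sum_sub_distrib]
  simp_rw [Finset.sum_mul, Finset.mul_sum, ← Finset.sum_sub_distrib,
    smul_mul_assoc, mul_smul_comm, ← smul_sub, hcomm, smul_sub, ite_smul, zero_smul,
    smul_ite, smul_zero, Finset.sum_sub_distrib, Finset.sum_ite_eq' Finset.univ a,
    Finset.mem_univ, if_true]
  rw [Finset.sum_comm]
  simp_rw [Finset.sum_ite_eq' Finset.univ a, Finset.mem_univ, if_true,
    ← Finset.sum_sub_distrib, smul_smul, Finset.smul_sum, smul_smul]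
  refine Finset.sum_congr rfl fun i _ => ?_
  rw [hF a i]
  module
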